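/- arXiv:2102.11069 — 2 statements merged into one kernel-verified Lean document; each statement's English description precedes it below -/
import Mathlib

section
/- For every probability measure Q on H, R^adv_D(B_Q) − TV(Π, Δ) ≤ R_𝐃(B_Q), where TV denotes the total variation distance between the adversarial-example distribution Π and the perturbed-example distribution Δ. -/
open MeasureTheory ProbabilityTheory ENNReal

/-- `R^adv_D(B_Q) − TV(Π, Δ) ≤ R_𝐃(B_Q)`, where `Δ` is the
perturbed-example distribution (pushforward of `𝐃 = D ⊗ ω` by `((x,y),ε) ↦ (x+ε,y)`)
and `Π` is the adversarial-example distribution (pushforward of `D` by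
`(x,y) ↦ (x+ε*(x,y),y)`), `TV` being the total variation distance. -/
theorem adversarial_sub_tv_le_averaged
    {d : ℕ} (hd : 1 ≤ d)
    {H : Type*} [MeasurableSpace H]
    (f : H → (Fin d → ℝ) → ℝ)
    (hf_meas : Measurable (Function.uncurry f))
    (hf_bdd : ∀ h x, f h x ∈ Set.Icc (-1 : ℝ) 1)
    (D : Measure ((Fin d → ℝ) × ↥({-1, 1} : Set ℝ))) [IsProbabilityMeasure D]
    (b : ℝ) (hb : 0 < b)
    (ω : Kernel ((Fin d → ℝ) × ↥({-1, 1} : Set ℝ)) (Fin d → ℝ)) [IsMarkovKernel ω]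
    (hωB : ∀ z, ω z {ε | ‖ε‖ ≤ b} = 1)
    (Q : Measure H) [IsProbabilityMeasure Q]
    (hsup_meas : Measurable fun z : (Fin d → ℝ) × ↥({-1, 1} : Set ℝ) =>
      ⨆ ε ∈ {ε : Fin d → ℝ | ‖ε‖ ≤ b},
        (if (z.2 : ℝ) * ∫ h, f h (z.1 + ε) ∂Q ≤ 0 then (1 : ℝ≥0∞) else 0))
    (εstar : (Fin d → ℝ) × ↥({-1, 1} : Set ℝ) → (Fin d → ℝ))
    (hεstar_meas : Measurable εstar)
    (hεstar_mem : ∀ z, ‖εstar z‖ ≤ b)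
    (hεstar_max : ∀ᵐ z ∂D,
      (if (z.2 : ℝ) * ∫ h, f h (z.1 + εstar z) ∂Q ≤ 0 then (1 : ℝ≥0∞) else 0)
        = ⨆ ε ∈ {ε : Fin d → ℝ | ‖ε‖ ≤ b},
            (if (z.2 : ℝ) * ∫ h, f h (z.1 + ε) ∂Q ≤ 0 then (1 : ℝ≥0∞) else 0)) :
    (∫⁻ z, ⨆ ε ∈ {ε : Fin d → ℝ | ‖ε‖ ≤ b},
        (if (z.2 : ℝ) * ∫ h, f h (z.1 + ε) ∂Q ≤ 0 then (1 : ℝ≥0∞) else 0) ∂D).toReal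
      - (⨆ (A : Set ((Fin d → ℝ) × ↥({-1, 1} : Set ℝ))) (_ : MeasurableSet A),
          |((D.map fun z => (z.1 + εstar z, z.2)) A).toReal
            - (((D.compProd ω).map fun p => (p.1.1 + p.2, p.1.2)) A).toReal|)
      ≤ ((D.compProd ω) {p | (p.1.2 : ℝ) * ∫ h, f h (p.1.1 + p.2) ∂Q ≤ 0}).toReal := by
  classical
  have hg : Measurable fun x : Fin d → ℝ => ∫ h, f h x ∂Q :=
    (MeasureTheory.StronglyMeasurable.integral_prod_left'
      (f := Function.uncurry f) hf_meas.stronglyMeasurable).measurable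
  set E : Set ((Fin d → ℝ) × ↥({-1, 1} : Set ℝ)) :=
    {w | (w.2 : ℝ) * ∫ h, f h w.1 ∂Q ≤ 0} with hEdef
  have hE : MeasurableSet E := by
    apply measurableSet_le
    · exact (measurable_subtype_coe.comp measurable_snd).mul (hg.comp measurable_fst)
    · exact measurable_const
  have hT : Measurable (fun z : (Fin d → ℝ) × ↥({-1, 1} : Set ℝ) =>
      (z.1 + εstar z, z.2)) := (measurable_fst.add hεstar_meas).prodMk measurable_snd
  have hS : Measurable (fun p : ((Fin d → ℝ) × ↥({-1, 1} : Set ℝ)) × (Fin d → ℝ) =>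
      (p.1.1 + p.2, p.1.2)) :=
    (measurable_fst.fst.add measurable_snd).prodMk measurable_fst.snd
  set μ := D.map (fun z : (Fin d → ℝ) × ↥({-1, 1} : Set ℝ) => (z.1 + εstar z, z.2))
    with hμdef
  set ν := (D.compProd ω).map
    (fun p : ((Fin d → ℝ) × ↥({-1, 1} : Set ℝ)) × (Fin d → ℝ) => (p.1.1 + p.2, p.1.2))
    with hνdef
  -- LHS integral equals Π E
  have hLHS : (∫⁻ z, ⨆ ε ∈ {ε : Fin d → ℝ | ‖ε‖ ≤ b},
      (if (z.2 : ℝ) * ∫ h, f h (z.1 + ε) ∂Q ≤ 0 then (1 : ℝ≥0∞) else 0) ∂D)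
      = μ E := by
    rw [← lintegral_congr_ae hεstar_max]
    have h1 : ∀ z : (Fin d → ℝ) × ↥({-1, 1} : Set ℝ),
        (if (z.2 : ℝ) * ∫ h, f h (z.1 + εstar z) ∂Q ≤ 0 then (1 : ℝ≥0∞) else 0)
          = ((fun z : (Fin d → ℝ) × ↥({-1, 1} : Set ℝ) => (z.1 + εstar z, z.2)) ⁻¹' E).indicator
              (fun _ => (1 : ℝ≥0∞)) z := by
      intro z
      by_cases hz : (z.2 : ℝ) * ∫ h, f h (z.1 + εstar z) ∂Q ≤ 0 <;>
        simp [Set.indicator_apply, hEdef, hz]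
    simp_rw [h1]
    rw [lintegral_indicator (hE.preimage hT), setLIntegral_one,
      hμdef, Measure.map_apply hT hE]
  -- RHS equals Δ E
  have hRHS : (D.compProd ω) {p | (p.1.2 : ℝ) * ∫ h, f h (p.1.1 + p.2) ∂Q ≤ 0}
      = ν E := by
    rw [hνdef, Measure.map_apply hS hE]
    rfl
  rw [hLHS, hRHS]
  haveI : IsProbabilityMeasure μ := Measure.isProbabilityMeasure_map hT.aemeasurable
  haveI : IsProbabilityMeasure ν := Measure.isProbabilityMeasure_map hS.aemeasurable
  have hbound : ∀ A : Set ((Fin d → ℝ) × ↥({-1, 1} : Set ℝ)),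
      |(μ A).toReal - (ν A).toReal| ≤ 2 := by
    intro A
    have h1 : (μ A).toReal ≤ 1 := by
      have := prob_le_one (μ := μ) (s := A)
      simpa using ENNReal.toReal_mono one_ne_top this
    have h2 : (ν A).toReal ≤ 1 := by
      have := prob_le_one (μ := ν) (s := A)
      simpa using ENNReal.toReal_mono one_ne_top this
    have h3 : (0:ℝ) ≤ (μ A).toReal := ENNReal.toReal_nonneg
    have h4 : (0:ℝ) ≤ (ν A).toReal := ENNReal.toReal_nonneg
    rw [abs_sub_le_iff]; constructor <;> linarith
  have hbdd : BddAbove (Set.range fun A : Set ((Fin d → ℝ) × ↥({-1, 1} : Set ℝ)) =>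
      ⨆ _ : MeasurableSet A, |(μ A).toReal - (ν A).toReal|) := by
    refine ⟨2, ?_⟩
    rintro x ⟨A, rfl⟩
    exact Real.iSup_le (fun _ => hbound A) (by norm_num)
  have hkey : |(μ E).toReal - (ν E).toReal|
      ≤ ⨆ (A : Set ((Fin d → ℝ) × ↥({-1, 1} : Set ℝ))) (_ : MeasurableSet A),
          |(μ A).toReal - (ν A).toReal| := by
    have := le_ciSup hbdd E
    rwa [ciSup_pos hE] at this
  have habs : (μ E).toReal - (ν E).toReal ≤ |(μ E).toReal - (ν E).toReal| :=
    le_abs_self _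
  linarith
end

section
/- For every probability measure Q on H, the averaged adversarial risk is sandwiched between the worst-case adversarial risk minus a total variation term and the worst-case adversarial risk itself: R^adv_D(B_Q) − TV(Π, Δ) ≤ R_𝐃(B_Q) ≤ R^adv_D(B_Q). -/
/-!
Given an example `z`, the perturbation is drawn from `ω z`, which is carried by the ball `B`;
so the conditional probability of a misclassification is at most `1`, and it vanishes unless
some `ε ∈ B` misclassifies, i.e. unless the worst-case indicator is `1`. Integrating over `D`
gives the upper bound. For the lower bound, the worst-case risk is `Π(T)` for the misclassified
set `T`, because `ε*` attains the supremum almost surely, and the averaged risk is `Δ(T)`;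
these differ by at most `TV(Π, Δ)`.
-/

open MeasureTheory ProbabilityTheory ENNReal

namespace MeasureTheory

variable {α β : Type*} [MeasurableSpace α] [MeasurableSpace β]

noncomputable def tvDist (μ ν : Measure α) : ℝ :=
  ⨆ (A : Set α) (_ : MeasurableSet A), |μ.real A - ν.real A|

lemma abs_measureReal_sub_le_tvDist (μ ν : Measure α) [IsFiniteMeasure μ] [IsFiniteMeasure ν]
    {A : Set α} (hA : MeasurableSet A) : |μ.real A - ν.real A| ≤ tvDist μ ν := by
  set M := max (μ.real .univ) (ν.real .univ)
  have hbound : ∀ A, |μ.real A - ν.real A| ≤ M := fun A ↦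
    abs_sub_le_of_nonneg_of_le measureReal_nonneg
      ((measureReal_mono (Set.subset_univ A)).trans (le_max_left _ _)) measureReal_nonneg
      ((measureReal_mono (Set.subset_univ A)).trans (le_max_right _ _))
  refine le_ciSup_of_le ⟨M, ?_⟩ A (ciSup_pos (f := fun _ ↦ |μ.real A - ν.real A|) hA).ge
  rintro _ ⟨A, rfl⟩
  exact Real.iSup_le (fun _ ↦ hbound A) (le_max_of_le_left measureReal_nonneg)

lemma measure_le_iSup₂_indicator_one (ν : Measure β) [IsProbabilityMeasure ν] {s B : Set β}
    (hB : ∀ᵐ b ∂ν, b ∈ B) : ν s ≤ ⨆ b ∈ B, s.indicator 1 b := by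
  by_cases hsB : ∃ b ∈ B, b ∈ s
  · obtain ⟨b, hbB, hbs⟩ := hsB
    calc ν s ≤ 1 := prob_le_one
      _ = s.indicator 1 b := by simp [hbs]
      _ ≤ ⨆ b ∈ B, s.indicator 1 b := le_iSup₂ (f := fun b _ ↦ s.indicator 1 b) b hbB
  · push Not at hsB
    have hs_null : ν s = 0 :=
      measure_mono_null (fun b hbs hbB ↦ hsB b hbB hbs) (ae_iff.1 hB)
    simp [hs_null]

lemma compProd_le_lintegral_iSup₂_indicator_one {μ : Measure α} [SFinite μ] {κ : Kernel α β}
    [IsMarkovKernel κ] {S : Set (α × β)} (hS : MeasurableSet S) {B : Set β}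
    (hB : ∀ a, ∀ᵐ b ∂κ a, b ∈ B) :
    (μ ⊗ₘ κ) S ≤ ∫⁻ a, ⨆ b ∈ B, S.indicator 1 (a, b) ∂μ := by
  rw [Measure.compProd_apply hS]
  exact lintegral_mono fun a ↦ measure_le_iSup₂_indicator_one (κ a) (hB a)

section Sandwich

variable {Z E W : Type*} [MeasurableSpace Z] [MeasurableSpace E] [MeasurableSpace W]
  {D : Measure Z} {ω : Kernel Z E} {perturb : Z × E → W} {T : Set W} {B : Set E}
  {εstar : Z → E}

lemma lintegral_iSup₂_indicator_one_eq_map_apply (hperturb : Measurable perturb)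
    (hT : MeasurableSet T) (hεstar : Measurable εstar)
    (hεstar_max : ∀ᵐ z ∂D, T.indicator 1 (perturb (z, εstar z))
      = ⨆ ε ∈ B, T.indicator (1 : W → ℝ≥0∞) (perturb (z, ε))) :
    ∫⁻ z, ⨆ ε ∈ B, T.indicator 1 (perturb (z, ε)) ∂D
      = D.map (fun z ↦ perturb (z, εstar z)) T := by
  have hφ : Measurable fun z ↦ perturb (z, εstar z) :=
    hperturb.comp (measurable_id.prodMk hεstar)
  rw [← lintegral_congr_ae hεstar_max, Measure.map_apply hφ hT, ← lintegral_indicator_one (hφ hT)]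
  rfl

theorem averagedRisk_sandwich [IsFiniteMeasure D] [IsMarkovKernel ω]
    (hperturb : Measurable perturb) (hT : MeasurableSet T) (hω : ∀ z, ∀ᵐ ε ∂ω z, ε ∈ B)
    (hεstar : Measurable εstar)
    (hεstar_max : ∀ᵐ z ∂D, T.indicator 1 (perturb (z, εstar z))
      = ⨆ ε ∈ B, T.indicator (1 : W → ℝ≥0∞) (perturb (z, ε))) :
    (∫⁻ z, ⨆ ε ∈ B, T.indicator 1 (perturb (z, ε)) ∂D).toReal
        - tvDist (D.map fun z ↦ perturb (z, εstar z)) ((D ⊗ₘ ω).map perturb)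
        ≤ ((D ⊗ₘ ω) (perturb ⁻¹' T)).toReal
      ∧ ((D ⊗ₘ ω) (perturb ⁻¹' T)).toReal
        ≤ (∫⁻ z, ⨆ ε ∈ B, T.indicator 1 (perturb (z, ε)) ∂D).toReal := by
  have hworst := lintegral_iSup₂_indicator_one_eq_map_apply hperturb hT hεstar hεstar_max
  have haveraged : (D ⊗ₘ ω) (perturb ⁻¹' T) = (D ⊗ₘ ω).map perturb T :=
    (Measure.map_apply hperturb hT).symm
  refine ⟨?_, ?_⟩
  · rw [hworst, haveraged]
    have htv := abs_measureReal_sub_le_tvDist (D.map fun z ↦ perturb (z, εstar z))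
      ((D ⊗ₘ ω).map perturb) hT
    exact sub_le_comm.1 ((le_abs_self _).trans htv)
  · refine ENNReal.toReal_mono (hworst ▸ measure_ne_top _ _) ?_
    exact compProd_le_lintegral_iSup₂_indicator_one (hperturb hT) hω

end Sandwich

end MeasureTheory

theorem averaged_sandwich_adversarial_general
    {d : ℕ}
    {H : Type*} [MeasurableSpace H]
    (f : H → (Fin d → ℝ) → ℝ)
    (hf_meas : Measurable (Function.uncurry f))
    (D : Measure ((Fin d → ℝ) × ↥({-1, 1} : Set ℝ))) [IsProbabilityMeasure D]
    (b : ℝ)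
    (ω : Kernel ((Fin d → ℝ) × ↥({-1, 1} : Set ℝ)) (Fin d → ℝ)) [IsMarkovKernel ω]
    (hωB : ∀ z, ω z {ε | ‖ε‖ ≤ b} = 1)
    (Q : Measure H) [IsProbabilityMeasure Q]
    (εstar : (Fin d → ℝ) × ↥({-1, 1} : Set ℝ) → (Fin d → ℝ))
    (hεstar_meas : Measurable εstar)
    (hεstar_max : ∀ᵐ z ∂D,
      (if (z.2 : ℝ) * ∫ h, f h (z.1 + εstar z) ∂Q ≤ 0 then (1 : ℝ≥0∞) else 0)
        = ⨆ ε ∈ {ε : Fin d → ℝ | ‖ε‖ ≤ b},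
            (if (z.2 : ℝ) * ∫ h, f h (z.1 + ε) ∂Q ≤ 0 then (1 : ℝ≥0∞) else 0)) :
    (∫⁻ z, ⨆ ε ∈ {ε : Fin d → ℝ | ‖ε‖ ≤ b},
        (if (z.2 : ℝ) * ∫ h, f h (z.1 + ε) ∂Q ≤ 0 then (1 : ℝ≥0∞) else 0) ∂D).toReal
      - (⨆ (A : Set ((Fin d → ℝ) × ↥({-1, 1} : Set ℝ))) (_ : MeasurableSet A),
          |((D.map fun z => (z.1 + εstar z, z.2)) A).toReal
            - (((D.compProd ω).map fun p => (p.1.1 + p.2, p.1.2)) A).toReal|)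
      ≤ ((D.compProd ω) {p | (p.1.2 : ℝ) * ∫ h, f h (p.1.1 + p.2) ∂Q ≤ 0}).toReal
    ∧ ((D.compProd ω) {p | (p.1.2 : ℝ) * ∫ h, f h (p.1.1 + p.2) ∂Q ≤ 0}).toReal
      ≤ (∫⁻ z, ⨆ ε ∈ {ε : Fin d → ℝ | ‖ε‖ ≤ b},
          (if (z.2 : ℝ) * ∫ h, f h (z.1 + ε) ∂Q ≤ 0 then (1 : ℝ≥0∞) else 0) ∂D).toReal := by
  have hmargin : Measurable fun x ↦ ∫ h, f h x ∂Q :=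
    (hf_meas.comp measurable_swap).stronglyMeasurable.integral_prod_right'.measurable
  have hmisclassified :
      MeasurableSet {q : (Fin d → ℝ) × ↥({-1, 1} : Set ℝ) | (q.2 : ℝ) * ∫ h, f h q.1 ∂Q ≤ 0} :=
    measurableSet_le ((measurable_subtype_coe.comp measurable_snd).mul
      (hmargin.comp measurable_fst)) measurable_const
  have hperturb : Measurable fun p : ((Fin d → ℝ) × ↥({-1, 1} : Set ℝ)) × (Fin d → ℝ) ↦
      (p.1.1 + p.2, p.1.2) :=
    (measurable_fst.fst.add measurable_snd).prodMk measurable_fst.snd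
  have hω : ∀ z, ∀ᵐ ε ∂ω z, ε ∈ {ε : Fin d → ℝ | ‖ε‖ ≤ b} := fun z ↦
    (mem_ae_iff_prob_eq_one (measurableSet_le measurable_norm measurable_const)).2 (hωB z)
  -- Each `if` is definitionally an indicator of the misclassified set; elaborating the term
  -- without the expected type `(e :)` avoids higher-order unification against those `if`s.
  exact (averagedRisk_sandwich hperturb hmisclassified hω hεstar_meas hεstar_max :)

/-- The averaged adversarial risk is sandwiched between the worst-case
adversarial risk minus a total variation term and the worst-case adversarial risk:
`R^adv_D(B_Q) − TV(Π, Δ) ≤ R_𝐃(B_Q) ≤ R^adv_D(B_Q)`. -/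
theorem averaged_sandwich_adversarial
    {d : ℕ} (hd : 1 ≤ d)
    {H : Type*} [MeasurableSpace H]
    (f : H → (Fin d → ℝ) → ℝ)
    (hf_meas : Measurable (Function.uncurry f))
    (hf_bdd : ∀ h x, f h x ∈ Set.Icc (-1 : ℝ) 1)
    (D : Measure ((Fin d → ℝ) × ↥({-1, 1} : Set ℝ))) [IsProbabilityMeasure D]
    (b : ℝ) (hb : 0 < b)
    (ω : Kernel ((Fin d → ℝ) × ↥({-1, 1} : Set ℝ)) (Fin d → ℝ)) [IsMarkovKernel ω]
    (hωB : ∀ z, ω z {ε | ‖ε‖ ≤ b} = 1)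
    (Q : Measure H) [IsProbabilityMeasure Q]
    (hsup_meas : Measurable fun z : (Fin d → ℝ) × ↥({-1, 1} : Set ℝ) =>
      ⨆ ε ∈ {ε : Fin d → ℝ | ‖ε‖ ≤ b},
        (if (z.2 : ℝ) * ∫ h, f h (z.1 + ε) ∂Q ≤ 0 then (1 : ℝ≥0∞) else 0))
    (εstar : (Fin d → ℝ) × ↥({-1, 1} : Set ℝ) → (Fin d → ℝ))
    (hεstar_meas : Measurable εstar)
    (hεstar_mem : ∀ z, ‖εstar z‖ ≤ b)
    (hεstar_max : ∀ᵐ z ∂D,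
      (if (z.2 : ℝ) * ∫ h, f h (z.1 + εstar z) ∂Q ≤ 0 then (1 : ℝ≥0∞) else 0)
        = ⨆ ε ∈ {ε : Fin d → ℝ | ‖ε‖ ≤ b},
            (if (z.2 : ℝ) * ∫ h, f h (z.1 + ε) ∂Q ≤ 0 then (1 : ℝ≥0∞) else 0)) :
    (∫⁻ z, ⨆ ε ∈ {ε : Fin d → ℝ | ‖ε‖ ≤ b},
        (if (z.2 : ℝ) * ∫ h, f h (z.1 + ε) ∂Q ≤ 0 then (1 : ℝ≥0∞) else 0) ∂D).toReal
      - (⨆ (A : Set ((Fin d → ℝ) × ↥({-1, 1} : Set ℝ))) (_ : MeasurableSet A),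
          |((D.map fun z => (z.1 + εstar z, z.2)) A).toReal
            - (((D.compProd ω).map fun p => (p.1.1 + p.2, p.1.2)) A).toReal|)
      ≤ ((D.compProd ω) {p | (p.1.2 : ℝ) * ∫ h, f h (p.1.1 + p.2) ∂Q ≤ 0}).toReal
    ∧ ((D.compProd ω) {p | (p.1.2 : ℝ) * ∫ h, f h (p.1.1 + p.2) ∂Q ≤ 0}).toReal
      ≤ (∫⁻ z, ⨆ ε ∈ {ε : Fin d → ℝ | ‖ε‖ ≤ b},
          (if (z.2 : ℝ) * ∫ h, f h (z.1 + ε) ∂Q ≤ 0 then (1 : ℝ≥0∞) else 0) ∂D).toReal :=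
  averaged_sandwich_adversarial_general f hf_meas D b ω hωB Q εstar hεstar_meas hεstar_max
end
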